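/- arXiv:math/0611917 — 5 statements merged into one kernel-verified Lean document; each statement's English description precedes it below -/
import Mathlib

section
/- Let K be a field of characteristic p > 0 and let σ be an element of PGL₂(K) of finite order n. Then either p does not divide n, or n = p. -/
/-!
Suppose `p ∣ n`, say `n = m p`, lift `σ` to `A ∈ GL₂(K)` and put `B = A ^ m`: then `B ^ p` is
scalar while `B` is not. A non-scalar endomorphism of a plane has a cyclic vector, so everything
commuting with `B` lies in `K + K B`; writing `A = x + y B`, the Frobenius identity in this
commutative algebra gives `A ^ p = x ^ p + y ^ p B ^ p`, a scalar. Hence `n ∣ p`.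
-/

open Matrix

/-- `PGL₂(K) = GL₂(K)/K^×`: over a field, the scalar matrices are exactly the
center of `GL₂(K)`. -/
abbrev PGL2 (K : Type*) [Field K] : Type _ :=
  GL (Fin 2) K ⧸ Subgroup.center (GL (Fin 2) K)

open Module in
theorem LinearMap.exists_eq_algebraMap_add_smul_of_commute {K V : Type*} [Field K]
    [AddCommGroup V] [Module K V] (hV : finrank K V = 2) {f g : End K V} (hfg : Commute f g)
    (hg : g ∉ Set.range (algebraMap K (End K V))) :
    ∃ x y : K, f = algebraMap K _ x + y • g := by
  obtain ⟨v, hv⟩ : ∃ v, LinearIndependent K ![v, g v] := by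
    by_contra! h
    obtain ⟨a, rfl⟩ := LinearMap.exists_eq_smul_id_of_forall_notLinearIndependent h
    exact hg ⟨a, Algebra.algebraMap_eq_smul_one a⟩
  let b := basisOfLinearIndependentOfCardEqFinrank hv (by simp [hV])
  have hb : ⇑b = ![v, g v] := coe_basisOfLinearIndependentOfCardEqFinrank hv _
  obtain ⟨x, y, hfv⟩ : ∃ x y : K, f v = x • v + y • g v :=
    ⟨_, _, by simpa [Fin.sum_univ_two, hb] using (b.sum_repr (f v)).symm⟩
  refine ⟨x, y, b.ext fun i => ?_⟩
  have hfgv : f (g v) = g (f v) := LinearMap.congr_fun hfg v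
  fin_cases i <;> simp [hb, Algebra.algebraMap_eq_smul_one, hfv, hfgv]

theorem pow_char_algebraMap_add_smul_mem_range {K R : Type*} [CommSemiring K] [Semiring R]
    [Algebra K R] (p : ℕ) [Fact p.Prime] [CharP R p] {g : R}
    (hg : g ^ p ∈ Set.range (algebraMap K R)) (x y : K) :
    (algebraMap K R x + y • g) ^ p ∈ Set.range (algebraMap K R) := by
  obtain ⟨c, hc⟩ := hg
  refine ⟨x ^ p + y ^ p * c, ?_⟩
  rw [add_pow_char_of_commute p (Algebra.commutes' x _), smul_pow, ← hc, map_add, map_mul,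
    map_pow, Algebra.smul_def, map_pow]

theorem Matrix.exists_eq_algebraMap_add_smul_of_commute {K : Type*} [Field K]
    {A B : Matrix (Fin 2) (Fin 2) K} (hAB : Commute A B)
    (hB : B ∉ Set.range (algebraMap K (Matrix (Fin 2) (Fin 2) K))) :
    ∃ x y : K, A = algebraMap K _ x + y • B := by
  have hB' : toLinAlgEquiv' B ∉ Set.range (algebraMap K (Module.End K (Fin 2 → K))) := by
    rintro ⟨c, hc⟩
    exact hB ⟨c, toLinAlgEquiv'.injective (by rw [AlgEquiv.commutes, hc])⟩
  obtain ⟨x, y, h⟩ := LinearMap.exists_eq_algebraMap_add_smul_of_commute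
    (Module.finrank_fin_fun K) (hAB.map toLinAlgEquiv') hB'
  exact ⟨x, y, toLinAlgEquiv'.injective (by simpa using h)⟩

namespace Matrix.GeneralLinearGroup

theorem pow_mem_center_or_pow_char_mem_center {K : Type*} [Field K] (p : ℕ) [Fact p.Prime]
    [CharP K p] (A : GL (Fin 2) K) (m : ℕ) (h : A ^ (m * p) ∈ Subgroup.center (GL (Fin 2) K)) :
    A ^ m ∈ Subgroup.center (GL (Fin 2) K) ∨ A ^ p ∈ Subgroup.center (GL (Fin 2) K) := by
  simp only [mem_center_iff_val_mem_range_scalar, Units.val_pow_eq_pow_val, pow_mul] at h ⊢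
  refine or_iff_not_imp_left.2 fun hm => ?_
  obtain ⟨x, y, hA⟩ := exists_eq_algebraMap_add_smul_of_commute (Commute.self_pow _ m) hm
  rw [hA]
  exact pow_char_algebraMap_add_smul_mem_range p h x y

end Matrix.GeneralLinearGroup

theorem PGL2.pow_eq_one_or_pow_char_eq_one {K : Type*} [Field K] (p : ℕ) [Fact p.Prime]
    [CharP K p] (σ : PGL2 K) (m : ℕ) (h : σ ^ (m * p) = 1) : σ ^ m = 1 ∨ σ ^ p = 1 := by
  obtain ⟨A, rfl⟩ := QuotientGroup.mk_surjective σ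
  simp only [← QuotientGroup.mk_pow, QuotientGroup.eq_one_iff] at h ⊢
  exact GeneralLinearGroup.pow_mem_center_or_pow_char_mem_center p A m h

/-- If `K` is a field of characteristic `p > 0` and `σ ∈ PGL₂(K)` has finite
order `n`, then either `p ∤ n` or `n = p`. -/
theorem order_in_PGL2_charP {K : Type*} [Field K] (p : ℕ) [Fact p.Prime]
    [CharP K p] (σ : PGL2 K) (n : ℕ) (hn : 0 < n) (hord : orderOf σ = n) :
    ¬ p ∣ n ∨ n = p := by
  refine or_iff_not_imp_left.2 fun hpn => ?_
  obtain ⟨m, rfl⟩ := not_not.1 hpn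
  have hm : 0 < m := Nat.pos_of_mul_pos_left hn
  rcases PGL2.pow_eq_one_or_pow_char_eq_one p σ m (by rw [mul_comm, ← hord, pow_orderOf_eq_one])
    with h | h
  · have hpm : p * m ≤ m := hord ▸ Nat.le_of_dvd hm (orderOf_dvd_of_pow_eq_one h)
    have hp : 2 ≤ p := (Fact.out : p.Prime).two_le
    nlinarith
  · exact Nat.dvd_antisymm (hord ▸ orderOf_dvd_of_pow_eq_one h) (dvd_mul_right p m)
end

section
/- Let K be a field, and let σ ∈ PGL₂(K) be an element of finite order n such that the characteristic of K does not divide n. Then ζₙ + ζₙ^{-1} ∈ K, where ζₙ is a primitive n-th root of unity in an algebraic closure of K. -/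
/-!
Lift `σ` to `A ∈ GL₂(K)` and let `a`, `b` be the eigenvalues of `A` in an algebraically closed
extension `L`, so that `σ ^ m = 1` iff `A ^ m` is scalar. If `σ ≠ 1` then `a ≠ b`: otherwise
`A = a + N` with `N ^ 2 = 0`, and `A ^ n = a ^ n + n a ^ (n - 1) N` is scalar only if `N` is,
because `n ≠ 0` in `K`. For `a ≠ b`, interpolating `X ^ m` at `a` and `b` shows that `A ^ m` is
scalar iff `a ^ m = b ^ m`. Hence `a / b` is a primitive `n`-th root of unity, and
`a / b + b / a = (tr A) ^ 2 / det A - 2 ∈ K`. Any other primitive `n`-th root of unity `ζ` is a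
power of `a / b`, and `ζ + ζ⁻¹` is a Dickson polynomial in `a / b + b / a`.
-/

open Matrix

open Polynomial in
theorem Subring.pow_add_inv_pow_mem {L : Type*} [Field L] (S : Subring L) {x : L} (hx : x ≠ 0)
    (h : x + x⁻¹ ∈ S) (k : ℕ) : x ^ k + (x ^ k)⁻¹ ∈ S := by
  have hdickson : (dickson 1 (1 : L) k).eval (x + x⁻¹) = x ^ k + (x ^ k)⁻¹ := by
    rw [dickson_one_one_eval_add_inv x x⁻¹ (mul_inv_cancel₀ hx), inv_pow]
  have hcoe :
      (dickson 1 (1 : L) k).eval (x + x⁻¹) = S.subtype ((dickson 1 1 k).eval ⟨_, h⟩) := by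
    rw [← eval₂_at_apply, ← eval_map, map_dickson, map_one]
    rfl
  rw [← hdickson, hcoe]
  exact SetLike.coe_mem _

open Polynomial in
theorem IsAlgClosed.exists_add_eq_and_mul_eq {L : Type*} [Field L] [IsAlgClosed L] (s p : L) :
    ∃ a b : L, a + b = s ∧ a * b = p := by
  obtain ⟨a, ha⟩ := IsAlgClosed.exists_root (X ^ 2 - C s * X + C p : L[X])
    (by rw [show (X ^ 2 - C s * X + C p : L[X]).degree = 2 by compute_degree!]; decide)
  refine ⟨a, s - a, by ring, ?_⟩
  simp only [IsRoot, eval_add, eval_sub, eval_mul, eval_pow, eval_C, eval_X] at ha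
  linear_combination -ha

section QuadraticRelation

variable {R A : Type*} [CommRing R] [Ring A] [Algebra R A] {B : A} {a b : R}

/-- Lagrange interpolation of `X ^ m` at the roots `a`, `b` of `X ^ 2 - (a + b) X + a b`. -/
theorem sub_smul_pow_of_mul_self_eq (hB : B * B = (a + b) • B - (a * b) • 1) (m : ℕ) :
    (a - b) • B ^ m = (a ^ m - b ^ m) • B + (a * b ^ m - b * a ^ m) • 1 := by
  induction m with
  | zero => simp
  | succ m ih =>
    rw [pow_succ, ← smul_mul_assoc, ih, add_mul, smul_mul_assoc, smul_mul_assoc, one_mul, hB]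
    match_scalars <;> ring

theorem smul_one_add_pow_succ {N : A} (hN : N * N = 0) (m : ℕ) :
    (a • 1 + N) ^ (m + 1) = a ^ (m + 1) • 1 + ((m + 1) * a ^ m) • N := by
  induction m with
  | zero => simp
  | succ m ih =>
    rw [pow_succ, ih]
    simp only [add_mul, mul_add, smul_mul_assoc, mul_smul_comm, one_mul, mul_one, hN]
    push_cast
    match_scalars <;> ring

end QuadraticRelation

section QuadraticRelationField

variable {L A : Type*} [Field L] [Ring A] [Algebra L A] {B : A} {a b : L}

theorem pow_mem_bot_iff_of_ne (hB : B * B = (a + b) • B - (a * b) • 1)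
    (hB_not_mem : B ∉ (⊥ : Subalgebra L A)) (hab : a ≠ b) (m : ℕ) :
    B ^ m ∈ (⊥ : Subalgebra L A) ↔ a ^ m = b ^ m := by
  have hinterp := sub_smul_pow_of_mul_self_eq hB m
  have hone : (1 : A) ∈ (⊥ : Subalgebra L A) := Subalgebra.one_mem _
  constructor
  · intro hBm
    by_contra hne
    have hcoeff : a ^ m - b ^ m ≠ 0 := sub_ne_zero.2 hne
    refine hB_not_mem ?_
    rw [← inv_smul_smul₀ hcoeff B, eq_sub_of_add_eq hinterp.symm]
    exact Subalgebra.smul_mem _ (Subalgebra.sub_mem _ (Subalgebra.smul_mem _ hBm _)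
      (Subalgebra.smul_mem _ hone _)) _
  · intro he
    rw [he, sub_self, zero_smul, zero_add] at hinterp
    rw [← inv_smul_smul₀ (sub_ne_zero.2 hab) (B ^ m), hinterp]
    exact Subalgebra.smul_mem _ (Subalgebra.smul_mem _ hone _) _

theorem mem_bot_of_pow_mem_bot (hB : B * B = (a + a) • B - (a * a) • 1) (ha : a ≠ 0)
    {m : ℕ} (hm : (m : L) ≠ 0) (hBm : B ^ m ∈ (⊥ : Subalgebra L A)) :
    B ∈ (⊥ : Subalgebra L A) := by
  obtain ⟨k, rfl⟩ := Nat.exists_eq_succ_of_ne_zero (n := m) (by rintro rfl; simp at hm)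
  obtain ⟨N, rfl⟩ : ∃ N, B = a • 1 + N := ⟨B - a • 1, by abel⟩
  have hN_sq : N * N = 0 := by
    simp only [add_mul, mul_add, smul_mul_assoc, mul_smul_comm, one_mul, mul_one] at hB
    linear_combination (norm := module) hB
  have hcoeff : ((k : L) + 1) * a ^ k ≠ 0 := mul_ne_zero (by exact_mod_cast hm) (pow_ne_zero _ ha)
  have hone : (1 : A) ∈ (⊥ : Subalgebra L A) := Subalgebra.one_mem _
  have hN : N = (((k : L) + 1) * a ^ k)⁻¹ • ((a • 1 + N) ^ (k + 1) - a ^ (k + 1) • 1) := by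
    rw [smul_one_add_pow_succ hN_sq, add_sub_cancel_left, inv_smul_smul₀ hcoeff]
  rw [hN]
  exact Subalgebra.add_mem _ (Subalgebra.smul_mem _ hone _) (Subalgebra.smul_mem _
    (Subalgebra.sub_mem _ hBm (Subalgebra.smul_mem _ hone _)) _)

end QuadraticRelationField

open Polynomial in
theorem Matrix.mul_self_fin_two {R : Type*} [CommRing R] (M : Matrix (Fin 2) (Fin 2) R) :
    M * M = M.trace • M - M.det • 1 := by
  nontriviality R
  have h := M.aeval_self_charpoly
  rw [charpoly_fin_two] at h
  simp only [map_add, map_sub, map_mul, aeval_X, aeval_C, map_pow,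
    Algebra.algebraMap_eq_smul_one] at h
  rw [← sub_eq_zero, ← h]
  simp only [smul_mul_assoc, one_mul, sq]
  abel

theorem Matrix.eq_of_add_eq_trace_of_mul_eq_det {R : Type*} [CommRing R] [NoZeroDivisors R]
    {M : Matrix (Fin 2) (Fin 2) R} (hM : M ∈ (⊥ : Subalgebra R (Matrix (Fin 2) (Fin 2) R)))
    {a b : R} (hsum : a + b = M.trace) (hprod : a * b = M.det) : a = b := by
  obtain ⟨c, rfl⟩ := Algebra.mem_bot.1 hM
  rw [Algebra.algebraMap_eq_smul_one, trace_smul, trace_one, det_smul, det_one] at *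
  simp only [Fintype.card_fin, smul_eq_mul, mul_one] at hsum hprod
  have : (a - b) ^ 2 = 0 := by linear_combination (a + b + 2 * c) * hsum - 4 * hprod
  exact sub_eq_zero.1 (pow_eq_zero_iff two_ne_zero |>.1 this)

theorem Matrix.map_mem_range_scalar_iff {n R S : Type*} [Fintype n] [DecidableEq n] [CommRing R]
    [CommRing S] {f : R →+* S} (hf : Function.Injective f) {M : Matrix n n R} :
    M.map f ∈ Set.range (scalar n) ↔ M ∈ Set.range (scalar n) := by
  simp only [mem_range_scalar_iff_commute_single']
  refine forall₂_congr fun i j => ?_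
  rw [← commute_map_iff (f := f.mapMatrix) (Matrix.map_injective hf)]
  simp [map_single]

theorem Matrix.GeneralLinearGroup.mk_center_pow_eq_one_iff {n R : Type*} [Fintype n]
    [DecidableEq n] [CommRing R] (A : GL n R) (m : ℕ) :
    (QuotientGroup.mk A : GL n R ⧸ Subgroup.center (GL n R)) ^ m = 1 ↔
      (A : Matrix n n R) ^ m ∈ Set.range (Matrix.scalar n) := by
  rw [← QuotientGroup.mk_pow, QuotientGroup.eq_one_iff, mem_center_iff_val_mem_range_scalar,
    Units.val_pow_eq_pow_val]

theorem PGL2.isPrimitiveRoot_div {K L : Type*} [Field K] [Field L] [Algebra K L]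
    (A : GL (Fin 2) K) {a b : L}
    (hsum : a + b = algebraMap K L (A : Matrix (Fin 2) (Fin 2) K).trace)
    (hprod : a * b = algebraMap K L (A : Matrix (Fin 2) (Fin 2) K).det)
    (hchar : (orderOf (QuotientGroup.mk A : PGL2 K) : K) ≠ 0) :
    IsPrimitiveRoot (a / b) (orderOf (QuotientGroup.mk A : PGL2 K)) := by
  set σ : PGL2 K := QuotientGroup.mk A
  set B := (A : Matrix (Fin 2) (Fin 2) K).map (algebraMap K L)
  have hpow (m : ℕ) :
      σ ^ m = 1 ↔ B ^ m ∈ (⊥ : Subalgebra L (Matrix (Fin 2) (Fin 2) L)) := by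
    rw [GeneralLinearGroup.mk_center_pow_eq_one_iff,
      ← map_mem_range_scalar_iff (algebraMap K L).injective, Matrix.map_pow, Algebra.mem_bot]
    -- `algebraMap L (Matrix _ _ L)` is `scalar _` by definition
    rfl
  have htrace : a + b = B.trace := hsum.trans (AddMonoidHom.map_trace _ _)
  have hdet : a * b = B.det := hprod.trans (RingHom.map_det _ _)
  have hB : B * B = (a + b) • B - (a * b) • 1 := by rw [htrace, hdet]; exact mul_self_fin_two B
  have hprod₀ : a * b ≠ 0 := by
    rw [hprod]
    exact (map_ne_zero _).2 ((isUnit_iff_isUnit_det _).1 A.isUnit).ne_zero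
  have hb : b ≠ 0 := right_ne_zero_of_mul hprod₀
  by_cases hBscalar : B ∈ (⊥ : Subalgebra L (Matrix (Fin 2) (Fin 2) L))
  · obtain rfl : a = b := eq_of_add_eq_trace_of_mul_eq_det hBscalar htrace hdet
    have hσ : σ = 1 := by simpa using (hpow 1).2 (by rwa [pow_one])
    rw [div_self hb, hσ, orderOf_one]
    exact IsPrimitiveRoot.one
  · have hab : a ≠ b := by
      rintro rfl
      refine hBscalar (mem_bot_of_pow_mem_bot hB hb ?_ ((hpow _).1 (pow_orderOf_eq_one σ)))
      rwa [← map_natCast (algebraMap K L), map_ne_zero]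
    have hord : orderOf (a / b) = orderOf σ := orderOf_eq_orderOf_iff.2 fun m => by
      rw [div_pow, div_eq_one_iff_eq (pow_ne_zero _ hb), hpow,
        pow_mem_bot_iff_of_ne hB hBscalar hab]
    exact hord ▸ IsPrimitiveRoot.orderOf _

theorem PGL2.exists_isPrimitiveRoot_add_inv_mem_range {K L : Type*} [Field K] [Field L]
    [Algebra K L] [IsAlgClosed L] (σ : PGL2 K) (hchar : (orderOf σ : K) ≠ 0) :
    ∃ z : L, IsPrimitiveRoot z (orderOf σ) ∧ z + z⁻¹ ∈ (algebraMap K L).range := by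
  obtain ⟨A, rfl⟩ := QuotientGroup.mk_surjective σ
  set t := (A : Matrix (Fin 2) (Fin 2) K).trace
  set d := (A : Matrix (Fin 2) (Fin 2) K).det
  obtain ⟨a, b, hsum, hprod⟩ :=
    IsAlgClosed.exists_add_eq_and_mul_eq (algebraMap K L t) (algebraMap K L d)
  refine ⟨a / b, isPrimitiveRoot_div A hsum hprod hchar, (t ^ 2 - 2 * d) / d, ?_⟩
  have hd : d ≠ 0 := ((isUnit_iff_isUnit_det _).1 A.isUnit).ne_zero
  have ha : a ≠ 0 := by rintro rfl; exact hd (by simpa using hprod.symm)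
  have hb : b ≠ 0 := by rintro rfl; exact hd (by simpa using hprod.symm)
  rw [map_div₀, map_sub, map_mul, map_pow, ← hsum, ← hprod, map_ofNat]
  field_simp
  ring

theorem zeta_add_zeta_inv_mem_of_order_in_PGL2_general {K : Type*} [Field K]
    (σ : PGL2 K) (n : ℕ) (hord : orderOf σ = n)
    (hchar : ¬ (ringChar K ∣ n))
    (ζ : AlgebraicClosure K) (hζ : IsPrimitiveRoot ζ n) :
    ζ + ζ⁻¹ ∈ (algebraMap K (AlgebraicClosure K)).range := by
  subst hord
  have hn : orderOf σ ≠ 0 := by rintro h; exact hchar (h ▸ dvd_zero _)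
  have : NeZero (orderOf σ) := ⟨hn⟩
  obtain ⟨z, hz, hzK⟩ := PGL2.exists_isPrimitiveRoot_add_inv_mem_range
    (L := AlgebraicClosure K) σ (by rwa [Ne, ringChar.spec])
  obtain ⟨i, -, rfl⟩ := hz.eq_pow_of_pow_eq_one hζ.pow_eq_one
  exact Subring.pow_add_inv_pow_mem _ (hz.ne_zero hn) hzK i

/-- If `σ ∈ PGL₂(K)` has finite order `n` with `char K ∤ n`, then
`ζₙ + ζₙ⁻¹ ∈ K`, where `ζₙ` is a primitive `n`-th root of unity in an
algebraic closure of `K`. -/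
theorem zeta_add_zeta_inv_mem_of_order_in_PGL2 {K : Type*} [Field K]
    (σ : PGL2 K) (n : ℕ) (hn : 0 < n) (hord : orderOf σ = n)
    (hchar : ¬ (ringChar K ∣ n))
    (ζ : AlgebraicClosure K) (hζ : IsPrimitiveRoot ζ n) :
    ζ + ζ⁻¹ ∈ (algebraMap K (AlgebraicClosure K)).range :=
  zeta_add_zeta_inv_mem_of_order_in_PGL2_general σ n hord hchar ζ hζ
end

section
/- Let q = 2^r with r ≥ 1, and let ζ be a primitive (q+1)-th root of unity in an algebraic closure of F₂. Then F₂(ζ + ζ^{-1}) = F_q. -/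
open Polynomial

/-- The subfield of `x` with `x ^ 2 ^ r = x` in the algebraic closure of `F₂`. -/
noncomputable def fixedIF (r : ℕ) :
    IntermediateField (ZMod 2) (AlgebraicClosure (ZMod 2)) where
  carrier := {x | x ^ 2 ^ r = x}
  mul_mem' := fun {a b} ha hb => by
    simp only [Set.mem_setOf_eq] at *
    rw [mul_pow, ha, hb]
  one_mem' := by simp
  add_mem' := fun {a b} ha hb => by
    simp only [Set.mem_setOf_eq] at *
    rw [add_pow_char_pow, ha, hb]
  zero_mem' := by
    simp only [Set.mem_setOf_eq]
    exact zero_pow (by positivity)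
  algebraMap_mem' := fun c => by
    simp only [Set.mem_setOf_eq]
    rw [← map_pow, ZMod.pow_card_pow]
  inv_mem' := fun a ha => by
    simp only [Set.mem_setOf_eq] at *
    rw [inv_pow, ha]

lemma aux_nat (d r : ℕ) (hd : 1 ≤ d) (hdr : d ≤ r)
    (h : (2 ^ r + 1) ∣ (2 ^ (2 * d) - 1)) : d = r := by
  have hM : 4 ≤ 2 ^ (2 * d) := by
    calc (4 : ℕ) = 2 ^ 2 := by norm_num
    _ ≤ 2 ^ (2 * d) := Nat.pow_le_pow_right (by norm_num) (by omega)
  have h1 : 2 ^ r + 1 ≤ 2 ^ (2 * d) - 1 := Nat.le_of_dvd (by omega) h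
  have hm : r + 1 ≤ 2 * d := by
    by_contra hc
    push_neg at hc
    have h2 : 2 ^ (2 * d) ≤ 2 ^ r := Nat.pow_le_pow_right (by norm_num) (by omega)
    omega
  obtain ⟨s, hms⟩ : ∃ s, 2 * d = r + s := ⟨2 * d - r, by omega⟩
  have hdvd2 : (2 ^ r + 1) ∣ 2 ^ (2 * d) + 2 ^ s := by
    rw [hms]
    exact ⟨2 ^ s, by ring⟩
  have hdvd3 : (2 ^ r + 1) ∣ 2 ^ s + 1 := by
    have hh := Nat.dvd_sub hdvd2 h
    have he : 2 ^ (2 * d) + 2 ^ s - (2 ^ (2 * d) - 1) = 2 ^ s + 1 := by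
      generalize (2 : ℕ) ^ (2 * d) = A at hM ⊢
      generalize (2 : ℕ) ^ s = B
      omega
    rwa [he] at hh
  have h3 : 2 ^ r + 1 ≤ 2 ^ s + 1 := Nat.le_of_dvd (by positivity) hdvd3
  have hrs : r ≤ s := by
    by_contra hc
    push_neg at hc
    have : 2 ^ s < 2 ^ r := Nat.pow_lt_pow_right (by norm_num) hc
    omega
  omega

/-- If `q = 2^r` (`r ≥ 1`) and `ζ` is a primitive `(q+1)`-th root of unity in an
algebraic closure of `F₂`, then `F₂(ζ + ζ⁻¹) = F_q`, i.e. the subfield generated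
by `ζ + ζ⁻¹` over `F₂` has exactly `q` elements (finite subfields of the
algebraic closure of `F₂` are determined by their cardinality). -/
theorem adjoin_primitiveRoot_add_inv_eq_Fq (r : ℕ) (hr : 1 ≤ r)
    (ζ : AlgebraicClosure (ZMod 2)) (hζ : IsPrimitiveRoot ζ (2 ^ r + 1)) :
    Nat.card (IntermediateField.adjoin (ZMod 2) {ζ + ζ⁻¹}) = 2 ^ r := by
  classical
  set α := ζ + ζ⁻¹ with hα
  set E := IntermediateField.adjoin (ZMod 2) {α} with hE
  have hζ0 : ζ ≠ 0 := hζ.ne_zero (by positivity)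
  have hζn : ζ ^ (2 ^ r + 1) = 1 := hζ.pow_eq_one
  have hζq : ζ ^ 2 ^ r = ζ⁻¹ := by
    refine eq_inv_of_mul_eq_one_right ?_
    rw [← pow_succ']
    exact hζn
  -- α is fixed by x ↦ x ^ 2 ^ r
  have hαq : α ^ 2 ^ r = α := by
    rw [hα, add_pow_char_pow, hζq, inv_pow, hζq, inv_inv, add_comm]
  have hint : IsIntegral (ZMod 2) α := Algebra.IsIntegral.isIntegral α
  haveI : FiniteDimensional (ZMod 2) E := IntermediateField.adjoin.finiteDimensional hint
  haveI : Finite E := Module.finite_of_finite (ZMod 2)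
  haveI : Fintype E := Fintype.ofFinite E
  set d := Module.finrank (ZMod 2) E with hd
  have hcard : Fintype.card E = 2 ^ d := by
    rw [Module.card_eq_pow_finrank (K := ZMod 2) (V := E), ZMod.card]
  -- upper bound : E is contained in the fixed field of x ↦ x ^ 2 ^ r
  have hEle : E ≤ fixedIF r := by
    rw [hE, IntermediateField.adjoin_le_iff, Set.singleton_subset_iff]
    exact hαq
  have hcard_le : Nat.card E ≤ 2 ^ r := by
    set p : (AlgebraicClosure (ZMod 2))[X] := X ^ 2 ^ r - X with hp
    have hp0 : p ≠ 0 := by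
      rw [hp]
      exact FiniteField.X_pow_card_pow_sub_X_ne_zero _ (by omega) (by norm_num)
    have hinj : Function.Injective
        (fun x : E => (⟨(x : AlgebraicClosure (ZMod 2)), by
          rw [Multiset.mem_toFinset, mem_roots hp0]
          have hx : (x : AlgebraicClosure (ZMod 2)) ^ 2 ^ r = (x : AlgebraicClosure (ZMod 2)) :=
            hEle x.2
          simp [hp, IsRoot, sub_eq_zero, hx]⟩ : {y // y ∈ p.roots.toFinset})) := by
      intro a b hab
      have h5 := congrArg
        (fun y : {y // y ∈ p.roots.toFinset} => (y : AlgebraicClosure (ZMod 2))) hab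
      exact Subtype.ext h5
    calc Nat.card E ≤ Nat.card {y // y ∈ p.roots.toFinset} :=
          Nat.card_le_card_of_injective _ hinj
      _ = p.roots.toFinset.card := by rw [Nat.card_eq_fintype_card, Fintype.card_coe]
      _ ≤ Multiset.card p.roots := Multiset.toFinset_card_le _
      _ ≤ p.natDegree := Polynomial.card_roots' p
      _ = 2 ^ r := by
        rw [hp]
        exact FiniteField.X_pow_card_pow_sub_X_natDegree_eq _ (by omega) (by norm_num)
  have hNcard : Nat.card E = 2 ^ d := by rw [Nat.card_eq_fintype_card, hcard]
  have hdr : d ≤ r := by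
    rw [hNcard] at hcard_le
    exact (Nat.pow_le_pow_iff_right (by norm_num)).mp hcard_le
  have hd1 : 1 ≤ d := Module.finrank_pos
  -- α is fixed by x ↦ x ^ 2 ^ d
  have hαd : α ^ 2 ^ d = α := by
    have hmem : α ∈ E := IntermediateField.subset_adjoin _ _ rfl
    have h1 := FiniteField.pow_card (⟨α, hmem⟩ : E)
    rw [hcard] at h1
    have h2 := congrArg (fun x : E => (x : AlgebraicClosure (ZMod 2))) h1
    simpa using h2
  -- the quadratic equation for ζ
  have h2 : (2 : AlgebraicClosure (ZMod 2)) = 0 := CharTwo.two_eq_zero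
  have hmi : ζ * ζ⁻¹ = 1 := mul_inv_cancel₀ hζ0
  have hquad : ζ * ζ + α * ζ + 1 = 0 := by
    have h1 : ζ⁻¹ * ζ = 1 := inv_mul_cancel₀ hζ0
    linear_combination ζ * hα + h1 + (ζ * ζ + 1) * h2
  -- apply Frobenius^d
  have hy : ζ ^ 2 ^ d * ζ ^ 2 ^ d + α * ζ ^ 2 ^ d + 1 = 0 := by
    have h3 := congrArg (iterateFrobenius (AlgebraicClosure (ZMod 2)) 2 d) hquad
    simpa [iterateFrobenius_def, map_add, map_mul, map_one, mul_pow, hαd] using h3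
  have hfac : (ζ ^ 2 ^ d + ζ) * (ζ ^ 2 ^ d + ζ⁻¹) = 0 := by
    linear_combination hy - ζ ^ 2 ^ d * hα + hmi
  have hcases : ζ ^ 2 ^ d = ζ ∨ ζ ^ 2 ^ d = ζ⁻¹ := by
    rcases mul_eq_zero.mp hfac with h | h
    · left
      have h4 := eq_neg_of_add_eq_zero_left h
      rwa [CharTwo.neg_eq] at h4
    · right
      have h4 := eq_neg_of_add_eq_zero_left h
      rwa [CharTwo.neg_eq] at h4
  have hQQ : ζ ^ 2 ^ (2 * d) = ζ := by
    have he : (2 : ℕ) ^ (2 * d) = 2 ^ d * 2 ^ d := by rw [two_mul, pow_add]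
    rw [he, pow_mul]
    rcases hcases with h | h
    · rw [h, h]
    · rw [h, inv_pow, h, inv_inv]
  have hdvd : (2 ^ r + 1) ∣ (2 ^ (2 * d) - 1) := by
    have hM : 1 ≤ 2 ^ (2 * d) := Nat.one_le_two_pow
    have hpow : ζ ^ (2 ^ (2 * d) - 1) = 1 := by
      have hmul : ζ ^ (2 ^ (2 * d) - 1) * ζ = 1 * ζ := by
        rw [one_mul, ← pow_succ, Nat.sub_add_cancel hM]
        exact hQQ
      exact mul_right_cancel₀ hζ0 hmul
    rw [hζ.eq_orderOf]
    exact orderOf_dvd_of_pow_eq_one hpow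
  have hfin : d = r := aux_nat d r hd1 hdr hdvd
  rw [hNcard, hfin]
end

section
/- Let q = 2^r with r ≥ 1 and set η = ζ + ζ^{-1} where ζ is a primitive (q+1)-th root of unity in an algebraic closure of F₂. Then η ∈ F_q, and the matrix T = [[0, -1],[1, η]] ∈ SL₂(F_q) has order exactly q + 1. -/
set_option maxHeartbeats 1000000

open Matrix Polynomial

private lemma aux_map_matrix {F K : Type*} [Field F] [Field K] (f : F →+* K) (η : F) :
    f.mapMatrix (!![0, -1; 1, η] : Matrix (Fin 2) (Fin 2) F) = !![0, -1; 1, f η] := by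
  ext i j
  fin_cases i <;> fin_cases j <;>
    simp [RingHom.mapMatrix_apply, Matrix.map_apply]

private lemma aux_conj {K : Type*} [Field K] (ζ : K) (hζ0 : ζ ≠ 0) :
    (!![0, -1; 1, ζ + ζ⁻¹] : Matrix (Fin 2) (Fin 2) K) * !![-ζ⁻¹, -ζ; 1, 1]
      = !![-ζ⁻¹, -ζ; 1, 1] * Matrix.diagonal ![ζ, ζ⁻¹] := by
  have hmul : ζ * ζ⁻¹ = 1 := mul_inv_cancel₀ hζ0
  have hmul' : ζ⁻¹ * ζ = 1 := inv_mul_cancel₀ hζ0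
  ext i j
  fin_cases i <;> fin_cases j <;>
    simp [Matrix.mul_apply, Fin.sum_univ_two, Matrix.diagonal] <;> ring_nf <;>
    simp [hmul, hmul']

private lemma aux_detP {K : Type*} [Field K] (ζ : K) :
    (!![-ζ⁻¹, -ζ; 1, 1] : Matrix (Fin 2) (Fin 2) K).det = ζ - ζ⁻¹ := by
  simp [Matrix.det_fin_two_of]; ring

private lemma aux_diag_pow {K : Type*} [Field K] (a b : K) (n : ℕ) :
    (Matrix.diagonal ![a, b] : Matrix (Fin 2) (Fin 2) K) ^ n
      = Matrix.diagonal ![a ^ n, b ^ n] := by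
  have h : (![a, b] : Fin 2 → K) ^ n = ![a ^ n, b ^ n] := by
    ext i; fin_cases i <;> simp
  rw [Matrix.diagonal_pow, h]

private lemma aux_diag_eq_one {K : Type*} [Field K] {a b : K} :
    (Matrix.diagonal ![a, b] : Matrix (Fin 2) (Fin 2) K) = 1 ↔ a = 1 ∧ b = 1 := by
  constructor
  · intro h
    constructor
    · simpa using congrFun (congrFun h 0) 0
    · simpa using congrFun (congrFun h 1) 1
  · rintro ⟨rfl, rfl⟩
    have h : (![(1 : K), 1]) = (fun _ => (1 : K)) := by ext i; fin_cases i <;> rfl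
    rw [h, Matrix.diagonal_one]

/-- Let `q = 2^r` (`r ≥ 1`) and `η = ζ + ζ⁻¹`, where `ζ` is a primitive
`(q+1)`-th root of unity in an algebraic closure of `F_q`. Then `η ∈ F_q`, and
the matrix `T = [[0,-1],[1,η]]` lies in `SL₂(F_q)` and has order exactly
`q + 1`. -/
theorem order_of_T_eq_q_add_one (r : ℕ) (hr : 1 ≤ r)
    (ζ : AlgebraicClosure (GaloisField 2 r))
    (hζ : IsPrimitiveRoot ζ (2 ^ r + 1)) :
    (ζ + ζ⁻¹ ∈ (algebraMap (GaloisField 2 r)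
        (AlgebraicClosure (GaloisField 2 r))).range) ∧
      ∀ η : GaloisField 2 r,
        algebraMap (GaloisField 2 r) (AlgebraicClosure (GaloisField 2 r)) η =
            ζ + ζ⁻¹ →
          (!![0, -1; 1, η] : Matrix (Fin 2) (Fin 2) (GaloisField 2 r)).det = 1 ∧
            orderOf (!![0, -1; 1, η] :
              Matrix (Fin 2) (Fin 2) (GaloisField 2 r)) = 2 ^ r + 1 := by
  classical
  let F := GaloisField 2 r
  let K := AlgebraicClosure F
  have hq2 : 2 ≤ 2 ^ r := by
    calc 2 = 2 ^ 1 := rfl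
    _ ≤ 2 ^ r := Nat.pow_le_pow_right (by norm_num) hr
  have hζ0 : ζ ≠ 0 := hζ.ne_zero (by omega)
  haveI : CharP K 2 := charP_of_injective_algebraMap (algebraMap F K).injective 2
  -- ζ ^ 2^r = ζ⁻¹
  have hzq : ζ ^ 2 ^ r = ζ⁻¹ := by
    symm
    apply inv_eq_of_mul_eq_one_right
    rw [← pow_succ']
    exact_mod_cast hζ.pow_eq_one
  have hziq : (ζ⁻¹) ^ 2 ^ r = ζ := by
    rw [inv_pow, hzq, inv_inv]
  -- η is fixed by Frobenius
  have heta_fix : (ζ + ζ⁻¹) ^ 2 ^ r = ζ + ζ⁻¹ := by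
    rw [add_pow_char_pow, hzq, hziq, add_comm]
  -- ζ ≠ ζ⁻¹
  have hne : ζ - ζ⁻¹ ≠ 0 := by
    intro h
    have h2 : ζ ^ 2 = 1 := by
      have := sub_eq_zero.mp h
      calc ζ ^ 2 = ζ * ζ := sq ζ
      _ = ζ * ζ⁻¹ := by rw [← this]
      _ = 1 := mul_inv_cancel₀ hζ0
    have := Nat.le_of_dvd (by norm_num) ((hζ.pow_eq_one_iff_dvd 2).mp h2)
    omega
  constructor
  · -- membership via root counting of X^q - X
    haveI : Fintype F := Fintype.ofFinite F
    have hcard : Fintype.card F = 2 ^ r := by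
      rw [← Nat.card_eq_fintype_card]
      exact GaloisField.card 2 r (by omega)
    set f : K[X] := X ^ 2 ^ r - X with hf
    have hfne : f ≠ 0 :=
      FiniteField.X_pow_card_sub_X_ne_zero K (by omega)
    have hfdeg : f.natDegree = 2 ^ r :=
      FiniteField.X_pow_card_sub_X_natDegree_eq K (by omega)
    have hroot : ∀ x : K, x ^ 2 ^ r = x → x ∈ f.roots.toFinset := by
      intro x hx
      rw [Multiset.mem_toFinset, mem_roots hfne]
      simp [hf, IsRoot, hx]
    set img : Finset K := Finset.univ.image (algebraMap F K) with himg
    have hsub : img ⊆ f.roots.toFinset := by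
      intro x hx
      rw [himg, Finset.mem_image] at hx
      obtain ⟨y, -, rfl⟩ := hx
      apply hroot
      rw [← map_pow, ← hcard, FiniteField.pow_card]
    have hcard1 : img.card = 2 ^ r := by
      rw [himg, Finset.card_image_of_injective _ (algebraMap F K).injective,
        Finset.card_univ, hcard]
    have hcard2 : f.roots.toFinset.card ≤ 2 ^ r := by
      calc f.roots.toFinset.card ≤ Multiset.card f.roots := f.roots.toFinset_card_le
      _ ≤ f.natDegree := f.card_roots'
      _ = 2 ^ r := hfdeg
    have heq : img = f.roots.toFinset :=
      Finset.eq_of_subset_of_card_le hsub (by omega)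
    have : ζ + ζ⁻¹ ∈ img := by
      rw [heq]; exact hroot _ heta_fix
    rw [himg, Finset.mem_image] at this
    obtain ⟨y, -, hy⟩ := this
    exact ⟨y, hy⟩
  · intro η hη
    refine ⟨by simp [Matrix.det_fin_two_of], ?_⟩
    set M : Matrix (Fin 2) (Fin 2) F := !![0, -1; 1, η] with hM
    set φ : Matrix (Fin 2) (Fin 2) F →+* Matrix (Fin 2) (Fin 2) K :=
      (algebraMap F K).mapMatrix with hφ
    have hφinj : Function.Injective φ := by
      intro A B h
      ext i j
      exact (algebraMap F K).injective
        (by simpa [hφ, RingHom.mapMatrix_apply, Matrix.map_apply] using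
          congrFun (congrFun h i) j)
    have hφM : φ M = !![0, -1; 1, ζ + ζ⁻¹] := by
      rw [hφ, hM, aux_map_matrix, hη]
    set D : Matrix (Fin 2) (Fin 2) K := Matrix.diagonal ![ζ, ζ⁻¹] with hD
    set P : Matrix (Fin 2) (Fin 2) K := !![-ζ⁻¹, -ζ; 1, 1] with hP
    have hPunit : IsUnit P := by
      rw [Matrix.isUnit_iff_isUnit_det, hP, aux_detP]
      exact hne.isUnit
    have hMP : (φ M) * P = P * D := by
      rw [hφM, hP, hD]
      exact aux_conj ζ hζ0
    obtain ⟨u, hu⟩ := hPunit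
    have hpow : ∀ n : ℕ, (φ M) ^ n * P = P * D ^ n := by
      intro n
      induction n with
      | zero => simp
      | succ n ih =>
        rw [pow_succ, pow_succ, mul_assoc, hMP, ← mul_assoc, ih, mul_assoc]
    have key : ∀ n : ℕ, M ^ n = 1 ↔ (2 ^ r + 1) ∣ n := by
      intro n
      rw [← hζ.pow_eq_one_iff_dvd]
      have hiff : M ^ n = 1 ↔ D ^ n = 1 := by
        constructor
        · intro h
          have h1 : (φ M) ^ n * P = P := by rw [← map_pow, h, φ.map_one, one_mul]
          have h2 : P * D ^ n = P * 1 := by rw [mul_one, ← hpow n, h1]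
          exact (Units.mul_right_inj u).mp (by rw [hu]; exact h2)
        · intro h
          apply hφinj
          rw [map_pow, φ.map_one]
          have h2 : (φ M) ^ n * P = 1 * P := by rw [hpow, h, mul_one, one_mul]
          exact (Units.mul_left_inj u).mp (by rw [hu]; exact h2)
      rw [hiff, hD, aux_diag_pow, aux_diag_eq_one]
      constructor
      · exact fun h => h.1
      · intro h
        exact ⟨h, by rw [inv_pow, h, inv_one]⟩
    have h1 : M ^ (2 ^ r + 1) = 1 := (key _).mpr dvd_rfl
    exact Nat.dvd_antisymm (orderOf_dvd_of_pow_eq_one h1)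
      ((key _).mp (pow_orderOf_eq_one M))
end

section
/- Let K be an algebraically closed field of characteristic p > 0, and let n ≥ 3 be an integer with p ∤ n and ζ a primitive n-th root of unity in K. Let V ⊆ K be a finite F_p(ζ²)-subspace with F_p-basis α₁, ..., α_r, and let a ∈ K. Then the subgroup of SL₂(K) generated by the matrices [[1, α_i],[0,1]] (1 ≤ i ≤ r) and τ = [[ζ, a],[0, ζ^{-1}]] has order n · p^r, with normal elementary abelian p-Sylow subgroup {[[1,v],[0,1]] : v ∈ V} and cyclic quotient of order n. -/
/-!
Everything happens in the upper triangular matrices `upper d b = !![d, b; 0, d⁻¹]`. Conjugation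
by `τ = upper ζ a` sends the unipotent matrix `unipotent v = !![1, v; 0, 1]` to `unipotent (ζ² v)`,
so `Q = unipotent '' V` is normalized by `τ` and `G = Q ⊔ ⟨τ⟩ = Q · ⟨τ⟩`. The power `τ ^ n` is
unipotent and commutes with `τ`, so `ζ² ≠ 1` forces `τ ^ n = 1`; and `τ ^ k ∈ Q` only when
`ζ ^ k = 1`. Hence `Q ∩ ⟨τ⟩ = 1` and `|G| = |Q| · n = p ^ r · n`.
-/

open Matrix Subgroup
open scoped MatrixGroups

theorem mul_mem_iff_of_pow_eq_one {M : Type*} [Monoid M] {S : Set M} {c : M} {n : ℕ}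
    (hn : n ≠ 0) (hc : c ^ n = 1) (hS : ∀ v ∈ S, c * v ∈ S) (v : M) : c * v ∈ S ↔ v ∈ S := by
  refine ⟨fun h => ?_, hS v⟩
  have hpow : ∀ m : ℕ, ∀ w ∈ S, c ^ m * w ∈ S := by
    intro m
    induction m with
    | zero => simp
    | succ m ih => intro w hw; simpa [pow_succ, mul_assoc] using ih _ (hS w hw)
  simpa [← mul_assoc, ← pow_succ, Nat.sub_add_cancel (Nat.one_le_iff_ne_zero.2 hn), hc]
    using hpow (n - 1) _ h

theorem Submodule.span_zmod_eq_addSubgroupClosure {M : Type*} [AddCommGroup M] {n : ℕ}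
    [Module (ZMod n) M] (s : Set M) :
    (Submodule.span (ZMod n) s).toAddSubgroup = AddSubgroup.closure s :=
  le_antisymm
    (fun _ hx => Submodule.span_le (p := AddSubgroup.toZModSubmodule n (AddSubgroup.closure s)).2
      AddSubgroup.subset_closure hx)
    ((AddSubgroup.closure_le _).2 Submodule.subset_span)

theorem AddSubgroup.coe_closure_range_eq_range_sum {A ι : Type*} [Ring A] [Fintype ι] {n : ℕ}
    [Algebra (ZMod n) A] (α : ι → A) :
    (AddSubgroup.closure (Set.range α) : Set A) =
      Set.range fun c : ι → ZMod n => ∑ i, algebraMap (ZMod n) A (c i) * α i := by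
  rw [← Submodule.span_zmod_eq_addSubgroupClosure (n := n), Submodule.coe_toAddSubgroup,
    ← Fintype.range_linearCombination, LinearMap.coe_range]
  congr 1
  ext c
  simp [Fintype.linearCombination_apply, Algebra.smul_def]

namespace Subgroup

variable {G : Type*} [Group G] {N : Subgroup G} {g : G}

theorem disjoint_zpowers_of_pow_mem (h : ∀ m : ℕ, g ^ m ∈ N → g ^ m = 1) :
    Disjoint N (zpowers g) := by
  rw [disjoint_def]
  rintro _ hN ⟨k, rfl⟩
  rcases Int.eq_nat_or_neg k with ⟨m, rfl | rfl⟩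
  · simpa using h m (by simpa using hN)
  · simpa using h m (by simpa using hN)

theorem card_sup_of_le_normalizer_of_disjoint {H : Subgroup G} (hH : H ≤ normalizer N)
    (hd : Disjoint N H) : Nat.card ↥(N ⊔ H) = Nat.card N * Nat.card H := by
  have hrange : Set.range (fun x : N × H => (x.1 : G) * x.2) = ↑(N ⊔ H) := by
    rw [coe_mul_of_right_le_normalizer_left N H hH]
    ext; simp [Set.mem_mul]
  rw [← Nat.card_prod, ← Nat.card_range_of_injective (mul_injective_of_disjoint hd), hrange]
  rfl

theorem exists_mul_pow_of_mem_sup_zpowers (hg : g ∈ normalizer N) (hfin : IsOfFinOrder g)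
    {x : G} (hx : x ∈ N ⊔ zpowers g) : ∃ q ∈ N, ∃ k : ℕ, x = q * g ^ k := by
  rw [← SetLike.mem_coe, coe_mul_of_right_le_normalizer_left N _ (zpowers_le.2 hg)] at hx
  obtain ⟨q, hq, t, ht, rfl⟩ := hx
  obtain ⟨k, rfl⟩ := hfin.mem_powers_iff_mem_zpowers.2 ht
  exact ⟨q, hq, k, rfl⟩

end Subgroup

namespace SL2

variable {K : Type*} [Field K]

def upper (d : Kˣ) (b : K) : SL(2, K) :=
  ⟨!![(d : K), b; 0, ↑d⁻¹], by simp [det_fin_two_of]⟩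

def unipotent (b : K) : SL(2, K) := upper 1 b

theorem coe_upper (d : Kˣ) (b : K) :
    (upper d b : Matrix (Fin 2) (Fin 2) K) = !![(d : K), b; 0, ↑d⁻¹] := rfl

theorem coe_unipotent (b : K) : (unipotent b : Matrix (Fin 2) (Fin 2) K) = !![1, b; 0, 1] := by
  simp [unipotent, coe_upper]

theorem upper_inj {d e : Kˣ} {b c : K} : upper d b = upper e c ↔ d = e ∧ b = c := by
  refine ⟨fun h => ?_, fun ⟨hd, hb⟩ => hd ▸ hb ▸ rfl⟩
  have h' := congrArg (fun g : SL(2, K) => (g : Matrix (Fin 2) (Fin 2) K)) h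
  simp only [coe_upper] at h'
  exact ⟨Units.ext (by simpa using congrFun (congrFun h' 0) 0),
    by simpa using congrFun (congrFun h' 0) 1⟩

theorem upper_mul (d e : Kˣ) (b c : K) :
    upper d b * upper e c = upper (d * e) (d * c + b * ↑e⁻¹) := by
  ext i j
  fin_cases i <;> fin_cases j <;> simp [coe_upper, mul_comm]

theorem upper_inv (d : Kˣ) (b : K) : (upper d b)⁻¹ = upper d⁻¹ (-b) := by
  ext i j
  fin_cases i <;> fin_cases j <;> simp [coe_upper, adjugate_fin_two]

theorem exists_upper_pow (d : Kˣ) (b : K) (k : ℕ) : ∃ c, upper d b ^ k = upper (d ^ k) c := by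
  induction k with
  | zero => exact ⟨0, by ext i j; fin_cases i <;> fin_cases j <;> simp [coe_upper]⟩
  | succ k ih =>
    obtain ⟨c, hc⟩ := ih
    exact ⟨_, by rw [pow_succ, hc, upper_mul, pow_succ]⟩

theorem unipotent_zero : unipotent (0 : K) = 1 := by
  ext i j
  fin_cases i <;> fin_cases j <;> simp [coe_unipotent]

theorem unipotent_mul (b c : K) : unipotent b * unipotent c = unipotent (b + c) := by
  simp [unipotent, upper_mul, add_comm]

theorem unipotent_inv (b : K) : (unipotent b)⁻¹ = unipotent (-b) := by
  simp [unipotent, upper_inv]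

theorem unipotent_pow (b : K) (m : ℕ) : unipotent b ^ m = unipotent (m • b) := by
  induction m with
  | zero => simp [unipotent_zero]
  | succ m ih => rw [pow_succ, ih, unipotent_mul, succ_nsmul]

theorem unipotent_pow_char (p : ℕ) [CharP K p] (b : K) : unipotent b ^ p = 1 := by
  rw [unipotent_pow, nsmul_eq_mul, CharP.cast_eq_zero, zero_mul, unipotent_zero]

theorem unipotent_injective : Function.Injective (unipotent : K → SL(2, K)) :=
  fun _ _ h => (upper_inj.1 h).2

theorem upper_mul_unipotent_mul_inv (d : Kˣ) (b v : K) :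
    upper d b * unipotent v * (upper d b)⁻¹ = unipotent ((d : K) ^ 2 * v) := by
  rw [unipotent, upper_inv, upper_mul, upper_mul, unipotent, upper_inj]
  refine ⟨by simp, ?_⟩
  simp only [Units.val_mul, Units.val_one, inv_one, inv_inv]
  ring

theorem upper_pow_eq_one_iff {d : Kˣ} (hd : d ^ 2 ≠ 1) (b : K) (m : ℕ) :
    upper d b ^ m = 1 ↔ d ^ m = 1 := by
  obtain ⟨c, hc⟩ := exists_upper_pow d b m
  rw [hc, ← unipotent_zero, unipotent, upper_inj]
  refine ⟨And.left, fun hdm => ⟨hdm, ?_⟩⟩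
  have hcomm : upper d b * upper d b ^ m * (upper d b)⁻¹ = upper d b ^ m := by group
  rw [hc, hdm, ← unipotent, upper_mul_unipotent_mul_inv, unipotent_injective.eq_iff] at hcomm
  have hd' : (d : K) ^ 2 ≠ 1 := by rwa [← Units.val_pow_eq_pow_val, Ne, Units.val_eq_one]
  exact (mul_left_eq_self₀.1 hcomm).resolve_left hd'

theorem eq_upper_iff (g : SL(2, K)) (d : Kˣ) (b : K) :
    g = upper d b ↔ (g : Matrix (Fin 2) (Fin 2) K) = !![(d : K), b; 0, (d : K)⁻¹] := by
  rw [← Units.val_inv_eq_inv_val, ← coe_upper]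
  exact ⟨congrArg _, Subtype.ext⟩

theorem eq_unipotent_iff (g : SL(2, K)) (b : K) :
    g = unipotent b ↔ (g : Matrix (Fin 2) (Fin 2) K) = !![1, b; 0, 1] := by
  simp [unipotent, eq_upper_iff]

def unipotentSubgroup (V : AddSubgroup K) : Subgroup SL(2, K) where
  carrier := unipotent '' V
  mul_mem' := by
    rintro _ _ ⟨v, hv, rfl⟩ ⟨w, hw, rfl⟩
    exact ⟨v + w, V.add_mem hv hw, (unipotent_mul v w).symm⟩
  one_mem' := ⟨0, V.zero_mem, unipotent_zero⟩
  inv_mem' := by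
    rintro _ ⟨v, hv, rfl⟩
    exact ⟨-v, V.neg_mem hv, (unipotent_inv v).symm⟩

theorem mem_unipotentSubgroup {V : AddSubgroup K} {g : SL(2, K)} :
    g ∈ unipotentSubgroup V ↔ ∃ v ∈ V, unipotent v = g := Iff.rfl

theorem coe_unipotentSubgroup (V : AddSubgroup K) :
    (unipotentSubgroup V : Set SL(2, K)) =
      {g : SL(2, K) | ∃ v ∈ V, (g : Matrix (Fin 2) (Fin 2) K) = !![1, v; 0, 1]} := by
  ext g
  simp only [SetLike.mem_coe, mem_unipotentSubgroup, Set.mem_ofPred_eq,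
    @eq_comm _ (unipotent _), eq_unipotent_iff]

theorem card_unipotentSubgroup (V : AddSubgroup K) :
    Nat.card (unipotentSubgroup V) = Nat.card V :=
  Nat.card_image_of_injective unipotent_injective _

theorem closure_unipotent_image (s : Set K) :
    closure (unipotent '' s) = unipotentSubgroup (AddSubgroup.closure s) := by
  refine le_antisymm ((closure_le _).2 (Set.image_mono AddSubgroup.subset_closure)) ?_
  rintro _ ⟨v, hv, rfl⟩
  induction hv using AddSubgroup.closure_induction with
  | mem v hv => exact subset_closure (Set.mem_image_of_mem _ hv)
  | zero => simp [unipotent_zero]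
  | add v w _ _ hv hw => simpa [unipotent_mul] using mul_mem hv hw
  | neg v _ hv => simpa [unipotent_inv] using inv_mem hv

theorem upper_mem_normalizer_unipotentSubgroup {V : AddSubgroup K} {d : Kˣ}
    (hV : ∀ v, (d : K) ^ 2 * v ∈ V ↔ v ∈ V) (b : K) :
    upper d b ∈ normalizer (unipotentSubgroup V : Set SL(2, K)) := by
  refine mem_normalizer_iff.2 fun g => ⟨?_, fun ⟨w, hw, hwg⟩ => ?_⟩
  · rintro ⟨v, hv, rfl⟩
    exact ⟨_, (hV v).2 hv, (upper_mul_unipotent_mul_inv d b v).symm⟩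
  · have hg : g = upper d⁻¹ (-b) * unipotent w * (upper d⁻¹ (-b))⁻¹ := by
      rw [hwg, ← upper_inv, inv_inv]; group
    refine ⟨_, (hV _).1 ?_, (upper_mul_unipotent_mul_inv _ _ w).symm.trans hg.symm⟩
    simpa [← mul_assoc, ← mul_pow] using hw

theorem orderOf_upper {d : Kˣ} (hd : d ^ 2 ≠ 1) (b : K) : orderOf (upper d b) = orderOf d :=
  orderOf_eq_orderOf_iff.2 (upper_pow_eq_one_iff hd b)

theorem disjoint_unipotentSubgroup_zpowers_upper (V : AddSubgroup K) {d : Kˣ} (hd : d ^ 2 ≠ 1)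
    (b : K) : Disjoint (unipotentSubgroup V) (zpowers (upper d b)) := by
  refine disjoint_zpowers_of_pow_mem fun m hm => (upper_pow_eq_one_iff hd b m).2 ?_
  obtain ⟨c, hc⟩ := exists_upper_pow d b m
  obtain ⟨v, -, hv⟩ := hm
  exact (upper_inj.1 (hv.trans hc)).1.symm

theorem closure_unipotent_upper {ι : Type*} (α : ι → K) (d : Kˣ) (b : K) :
    closure {g : SL(2, K) | (∃ i, (g : Matrix (Fin 2) (Fin 2) K) = !![1, α i; 0, 1]) ∨
        (g : Matrix (Fin 2) (Fin 2) K) = !![(d : K), b; 0, (d : K)⁻¹]} =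
      unipotentSubgroup (AddSubgroup.closure (Set.range α)) ⊔ zpowers (upper d b) := by
  have hgens : {g : SL(2, K) | (∃ i, (g : Matrix (Fin 2) (Fin 2) K) = !![1, α i; 0, 1]) ∨
      (g : Matrix (Fin 2) (Fin 2) K) = !![(d : K), b; 0, (d : K)⁻¹]} =
      unipotent '' Set.range α ∪ {upper d b} := by
    ext g
    simp [@eq_comm _ (unipotent _), eq_unipotent_iff, eq_upper_iff, or_comm]
  rw [hgens, Subgroup.closure_union, closure_unipotent_image, zpowers_eq_closure]

end SL2

open SL2

theorem group_G_n_pr_structure_general {K : Type*} [Field K]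
    (p : ℕ) [CharP K p] [Algebra (ZMod p) K]
    (n : ℕ) (hn : 3 ≤ n) (ζ : K) (hζ : IsPrimitiveRoot ζ n)
    (r : ℕ) (α : Fin r → K)
    (hind : Function.Injective fun c : Fin r → ZMod p =>
      ∑ i, algebraMap (ZMod p) K (c i) * α i)
    (hVζ : ∀ v ∈ Set.range (fun c : Fin r → ZMod p =>
        ∑ i, algebraMap (ZMod p) K (c i) * α i),
      ζ ^ 2 * v ∈ Set.range (fun c : Fin r → ZMod p =>
        ∑ i, algebraMap (ZMod p) K (c i) * α i))
    (a : K)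
    (G : Subgroup (Matrix.SpecialLinearGroup (Fin 2) K))
    (hG : G = Subgroup.closure
      {g : Matrix.SpecialLinearGroup (Fin 2) K |
        (∃ i : Fin r, (g : Matrix (Fin 2) (Fin 2) K) = !![1, α i; 0, 1]) ∨
          (g : Matrix (Fin 2) (Fin 2) K) = !![ζ, a; 0, ζ⁻¹]}) :
    Nat.card G = n * p ^ r ∧
      ∃ Q : Subgroup (Matrix.SpecialLinearGroup (Fin 2) K),
        (Q : Set (Matrix.SpecialLinearGroup (Fin 2) K)) =
            {g : Matrix.SpecialLinearGroup (Fin 2) K |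
              ∃ v ∈ Set.range (fun c : Fin r → ZMod p =>
                  ∑ i, algebraMap (ZMod p) K (c i) * α i),
                (g : Matrix (Fin 2) (Fin 2) K) = !![1, v; 0, 1]} ∧
          Q ≤ G ∧
          (∀ g ∈ G, ∀ q ∈ Q, g * q * g⁻¹ ∈ Q) ∧
          (∀ q ∈ Q, q ^ p = 1) ∧
          (∀ q ∈ Q, ∀ q' ∈ Q, q * q' = q' * q) ∧
          Nat.card Q = p ^ r ∧
          ∃ τ ∈ G, orderOf τ = n ∧
            ∀ g ∈ G, ∃ q ∈ Q, ∃ k : ℕ, g = q * τ ^ k := by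
  have hV := AddSubgroup.coe_closure_range_eq_range_sum (n := p) α
  set V := AddSubgroup.closure (Set.range α)
  have hcardV : Nat.card V = p ^ r := by
    rw [← SetLike.coe_sort_coe, hV, Nat.card_range_of_injective hind, Nat.card_fun, Nat.card_zmod,
      Nat.card_eq_fintype_card, Fintype.card_fin]
  rw [← hV] at hVζ ⊢
  obtain ⟨d, rfl⟩ : ∃ d : Kˣ, (d : K) = ζ := ⟨Units.mk0 ζ (hζ.ne_zero (by omega)), rfl⟩
  have hd : IsPrimitiveRoot d n := IsPrimitiveRoot.coe_units_iff.1 hζ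
  have hd2 : d ^ 2 ≠ 1 := hd.pow_ne_one_of_pos_of_lt two_ne_zero (by omega)
  set τ := upper d a
  set Q := unipotentSubgroup V
  rw [closure_unipotent_upper] at hG
  have hτQ : τ ∈ normalizer (Q : Set SL(2, K)) := by
    refine upper_mem_normalizer_unipotentSubgroup
      (mul_mem_iff_of_pow_eq_one (n := n) (by omega) ?_ hVζ) a
    rw [← pow_mul, mul_comm, pow_mul, hζ.pow_eq_one, one_pow]
  have horder : orderOf τ = n := (orderOf_upper hd2 a).trans hd.eq_orderOf.symm
  subst hG
  refine ⟨?_, Q, coe_unipotentSubgroup V, le_sup_left,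
    fun g hg q hq => (mem_normalizer_iff.1 (sup_le le_normalizer (zpowers_le.2 hτQ) hg) q).1 hq,
    ?_, ?_, ?_, τ, mem_sup_right (mem_zpowers τ), horder,
    fun g hg => exists_mul_pow_of_mem_sup_zpowers hτQ (orderOf_pos_iff.1 (by omega)) hg⟩
  · rw [card_sup_of_le_normalizer_of_disjoint (zpowers_le.2 hτQ)
      (disjoint_unipotentSubgroup_zpowers_upper V hd2 a), card_unipotentSubgroup, hcardV,
      Nat.card_zpowers, horder, mul_comm]
  · rintro _ ⟨v, -, rfl⟩
    exact unipotent_pow_char p v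
  · rintro _ ⟨v, -, rfl⟩ _ ⟨w, -, rfl⟩
    rw [unipotent_mul, unipotent_mul, add_comm]
  · rw [card_unipotentSubgroup, hcardV]

/-- Let `K` be algebraically closed of characteristic `p`, `n ≥ 3` with
`p ∤ n`, `ζ ∈ K` a primitive `n`-th root of unity, `V ⊆ K` an
`F_p(ζ²)`-stable subspace with `F_p`-basis `α₁, …, α_r`, and `a ∈ K`.  Then
the subgroup of `SL₂(K)` generated by the matrices `[[1,αᵢ],[0,1]]` and
`τ = [[ζ,a],[0,ζ⁻¹]]` has order `n·p^r`, its `p`-Sylow subgroup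
`{[[1,v],[0,1]] : v ∈ V}` is normal elementary abelian of order `p^r`, and
the quotient is cyclic of order `n`. -/
theorem group_G_n_pr_structure {K : Type*} [Field K] [IsAlgClosed K]
    (p : ℕ) [Fact p.Prime] [CharP K p] [Algebra (ZMod p) K]
    (n : ℕ) (hn : 3 ≤ n) (hpn : ¬ p ∣ n) (ζ : K) (hζ : IsPrimitiveRoot ζ n)
    (r : ℕ) (α : Fin r → K)
    (hind : Function.Injective fun c : Fin r → ZMod p =>
      ∑ i, algebraMap (ZMod p) K (c i) * α i)
    (hVζ : ∀ v ∈ Set.range (fun c : Fin r → ZMod p =>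
        ∑ i, algebraMap (ZMod p) K (c i) * α i),
      ζ ^ 2 * v ∈ Set.range (fun c : Fin r → ZMod p =>
        ∑ i, algebraMap (ZMod p) K (c i) * α i))
    (a : K)
    (G : Subgroup (Matrix.SpecialLinearGroup (Fin 2) K))
    (hG : G = Subgroup.closure
      {g : Matrix.SpecialLinearGroup (Fin 2) K |
        (∃ i : Fin r, (g : Matrix (Fin 2) (Fin 2) K) = !![1, α i; 0, 1]) ∨
          (g : Matrix (Fin 2) (Fin 2) K) = !![ζ, a; 0, ζ⁻¹]}) :
    Nat.card G = n * p ^ r ∧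
      ∃ Q : Subgroup (Matrix.SpecialLinearGroup (Fin 2) K),
        (Q : Set (Matrix.SpecialLinearGroup (Fin 2) K)) =
            {g : Matrix.SpecialLinearGroup (Fin 2) K |
              ∃ v ∈ Set.range (fun c : Fin r → ZMod p =>
                  ∑ i, algebraMap (ZMod p) K (c i) * α i),
                (g : Matrix (Fin 2) (Fin 2) K) = !![1, v; 0, 1]} ∧
          Q ≤ G ∧
          (∀ g ∈ G, ∀ q ∈ Q, g * q * g⁻¹ ∈ Q) ∧
          (∀ q ∈ Q, q ^ p = 1) ∧
          (∀ q ∈ Q, ∀ q' ∈ Q, q * q' = q' * q) ∧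
          Nat.card Q = p ^ r ∧
          ∃ τ ∈ G, orderOf τ = n ∧
            ∀ g ∈ G, ∃ q ∈ Q, ∃ k : ℕ, g = q * τ ^ k :=
  group_G_n_pr_structure_general p n hn ζ hζ r α hind hVζ a G hG
end
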